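/- The cross-conformal prediction set is contained in the CV+ interval: for any y ∈ ℝ, any τ ∈ [0,1], if τ + Σ_{i=1}^n 1[|y - μ_{k(i)}| < R_i] + τ·Σ_{i=1}^n 1[|y - μ_{k(i)}| = R_i] > α(n+1), then q⁻_{n,α}{μ_{k(i)} - R_i} ≤ y ≤ q⁺_{n,α}{μ_{k(i)} + R_i}. -/

import Mathlib

/-!
Let `S` be the set of `i` with `|y - μ i| ≤ R i`. Since `τ ≤ 1`, the membership condition
gives `α(n+1) < |S| + 1`. Every `i ∈ S` has `μ i - R i ≤ y`, so at least `⌊α(n+1)⌋` of the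
lower endpoints lie below `y`, i.e. `q⁻ ≤ y`. Every `i` with `μ i + R i < y` lies outside `S`,
so fewer than `n + 1 - α(n+1) = (1-α)(n+1)` upper endpoints lie strictly below `y`,
i.e. `y ≤ q⁺`.
-/

/-- The `k`-th smallest of `v 0, ..., v (n-1)` (1-indexed). -/
noncomputable def kth {n : ℕ} (v : Fin n → ℝ) (k : ℕ) : ℝ :=
  (((List.ofFn v) : Multiset ℝ).sort (· ≤ ·)).getD (k - 1) 0

/-- Upper quantile with the convention `q⁺ = +∞` if `⌈(1-α)(n+1)⌉ > n`. -/
noncomputable def qplusE {n : ℕ} (α : ℝ) (v : Fin n → ℝ) : EReal :=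
  if ⌈(1 - α) * (n + 1)⌉₊ ≤ n then ((kth v ⌈(1 - α) * (n + 1)⌉₊ : ℝ) : EReal) else ⊤

/-- Lower quantile with the convention `q⁻ = -∞` if `⌊α(n+1)⌋ < 1`. -/
noncomputable def qminusE {n : ℕ} (α : ℝ) (v : Fin n → ℝ) : EReal :=
  if 1 ≤ ⌊α * (n + 1)⌋₊ then ((kth v ⌊α * (n + 1)⌋₊ : ℝ) : EReal) else ⊥

open Finset

theorem List.Pairwise.lt_countP_iff {α : Type*} {r : α → α → Prop} {p : α → Bool}
    {l : List α} (hl : l.Pairwise r) (hp : ∀ a b, r a b → p b → p a) {i : ℕ}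
    (hi : i < l.length) : i < l.countP p ↔ p l[i] := by
  induction l generalizing i with
  | nil => simp at hi
  | cons a t ih =>
    obtain ⟨hat, ht⟩ := List.pairwise_cons.mp hl
    by_cases ha : p a
    · cases i with
      | zero => simp [ha]
      | succ j => simp [ha, ← ih ht (by simpa using hi)]
    · have htail : ∀ x ∈ t, p x = false := fun x hx => by
        simpa using mt (hp a x (hat x hx)) ha
      have hcount : t.countP p = 0 := List.countP_eq_zero.mpr (by simpa using htail)
      cases i with
      | zero => simp [ha, hcount]
      | succ j => simp [ha, hcount, htail _ (List.getElem_mem _)]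

section kth

variable {n : ℕ} (v : Fin n → ℝ)

theorem length_sort_ofFn : ((List.ofFn v : Multiset ℝ).sort (· ≤ ·)).length = n := by
  simp

theorem countP_sort_ofFn (p : ℝ → Prop) [DecidablePred p] :
    ((List.ofFn v : Multiset ℝ).sort (· ≤ ·)).countP (fun x => decide (p x)) =
      #{i | p (v i)} := by
  rw [← Multiset.coe_countP, Multiset.sort_eq, ← Fin.univ_val_map, Multiset.countP_map]
  rfl

theorem kth_eq_getElem {k : ℕ} (hk : k - 1 < n) :
    kth v k = ((List.ofFn v : Multiset ℝ).sort (· ≤ ·))[k - 1]'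
      (by rwa [length_sort_ofFn]) :=
  List.getD_eq_getElem _ _ _

variable {v}

theorem kth_le_of_le_card {k : ℕ} {y : ℝ} (hk : 1 ≤ k) (h : k ≤ #{i | v i ≤ y}) :
    kth v k ≤ y := by
  have hkn : k - 1 < n := by
    have := (card_le_univ {i | v i ≤ y}).trans_eq (Fintype.card_fin n)
    omega
  rw [kth_eq_getElem v hkn]
  have hsorted := Multiset.pairwise_sort (List.ofFn v : Multiset ℝ) (· ≤ ·)
  refine decide_eq_true_iff.mp (hsorted.lt_countP_iff (p := fun x => decide (x ≤ y))
    (by simpa using fun a b hab hb => hab.trans hb) _ |>.mp ?_)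
  rw [countP_sort_ofFn v (· ≤ y)]
  omega

theorem le_kth_of_card_lt {k : ℕ} {y : ℝ} (hk : k ≤ n) (h : #{i | v i < y} < k) :
    y ≤ kth v k := by
  have hkn : k - 1 < n := by omega
  rw [kth_eq_getElem v hkn]
  by_contra! hlt
  have hsorted := Multiset.pairwise_sort (List.ofFn v : Multiset ℝ) (· ≤ ·)
  have := hsorted.lt_countP_iff (p := fun x => decide (x < y))
    (by simpa using fun a b hab hb => hab.trans_lt hb) _ |>.mpr (decide_eq_true hlt)
  rw [countP_sort_ofFn v (· < y)] at this
  omega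

theorem qminusE_le_of_floor_le_card {α y : ℝ} (h : ⌊α * (n + 1)⌋₊ ≤ #{i | v i ≤ y}) :
    qminusE α v ≤ y := by
  unfold qminusE
  split_ifs with hk
  · exact EReal.coe_le_coe_iff.mpr (kth_le_of_le_card hk h)
  · exact bot_le

theorem le_qplusE_of_card_lt_ceil {α y : ℝ} (h : #{i | v i < y} < ⌈(1 - α) * (n + 1)⌉₊) :
    (y : EReal) ≤ qplusE α v := by
  unfold qplusE
  split_ifs with hk
  · exact EReal.coe_le_coe_iff.mpr (le_kth_of_card_lt hk h)
  · exact le_top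

end kth

theorem card_filter_le_eq_card_filter_lt_add_card_filter_eq {ι β : Type*} [Fintype ι]
    [LinearOrder β] (f g : ι → β) : #{i | f i ≤ g i} = #{i | f i < g i} + #{i | f i = g i} := by
  classical
  simp_rw [le_iff_lt_or_eq, filter_or]
  exact card_union_of_disjoint (disjoint_filter.mpr fun _ _ h => h.ne)

-- `μ i` is the paper's `μ_{k(i)}`, the prediction of the model fitted without the fold of `i`.
theorem cross_conformal_subset_CVplus_general (n : ℕ) (α : ℝ)
    (μ : Fin n → ℝ) (R : Fin n → ℝ)
    (y : ℝ) (τ : ℝ) (hτ1 : τ ≤ 1)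
    (hmem : α * (n + 1) <
      τ + ((Finset.univ.filter fun i => |y - μ i| < R i).card : ℝ)
        + τ * ((Finset.univ.filter fun i => |y - μ i| = R i).card : ℝ)) :
    qminusE α (fun i => μ i - R i) ≤ (y : EReal) ∧
      (y : EReal) ≤ qplusE α (fun i => μ i + R i) := by
  have hS : α * (n + 1) < #{i | |y - μ i| ≤ R i} + 1 := by
    have hτ : τ * #{i | |y - μ i| = R i} ≤ #{i | |y - μ i| = R i} :=
      mul_le_of_le_one_left (Nat.cast_nonneg _) hτ1
    rw [card_filter_le_eq_card_filter_lt_add_card_filter_eq]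
    push_cast
    linarith
  constructor
  · apply qminusE_le_of_floor_le_card
    calc ⌊α * (n + 1)⌋₊ ≤ #{i | |y - μ i| ≤ R i} :=
          Nat.lt_succ_iff.mp ((Nat.floor_lt' (Nat.succ_ne_zero _)).mpr (by exact_mod_cast hS))
      _ ≤ #{i | μ i - R i ≤ y} :=
          card_le_card (monotone_filter_right _ fun i _ hi => by linarith [(abs_le.mp hi).1])
  · apply le_qplusE_of_card_lt_ceil
    have hcard : (#{i | μ i + R i < y} : ℝ) + #{i | |y - μ i| ≤ R i} ≤ n := by
      rw [← Nat.cast_add, Nat.cast_le, ← card_union_of_disjoint (disjoint_filter.mpr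
        fun i _ hi hle => by linarith [(abs_le.mp hle).2])]
      exact (card_le_univ _).trans_eq (Fintype.card_fin n)
    exact Nat.lt_ceil.mpr (by linarith)

/-- the cross-conformal prediction set is contained in the
CV+ interval.  Here `μ i` is the prediction `μ̂_{-S_{k(i)}}(X_{n+1})` from
the model with the fold of point `i` removed, and `R i` the CV residuals. -/
theorem cross_conformal_subset_CVplus (n : ℕ) (α : ℝ) (hα0 : 0 ≤ α) (hα1 : α ≤ 1)
    (μ : Fin n → ℝ) (R : Fin n → ℝ) (hR : ∀ i, 0 ≤ R i)
    (y : ℝ) (τ : ℝ) (hτ0 : 0 ≤ τ) (hτ1 : τ ≤ 1)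
    (hmem : α * (n + 1) <
      τ + ((Finset.univ.filter fun i => |y - μ i| < R i).card : ℝ)
        + τ * ((Finset.univ.filter fun i => |y - μ i| = R i).card : ℝ)) :
    qminusE α (fun i => μ i - R i) ≤ (y : EReal) ∧
      (y : EReal) ≤ qplusE α (fun i => μ i + R i) :=
  cross_conformal_subset_CVplus_general n α μ R y τ hτ1 hmem
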